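/- arXiv:1910.13027 — 11 statements merged into one kernel-verified Lean document; each statement's English description precedes it below -/
import Mathlib

section
/- Let Ω be a nonempty set and let X : Ω → 𝕏 and Y : Ω → 𝕐 be uncertain variables such that Set.range X and Set.range Y are finite and nonempty. Let N be the number of equivalence classes of the ⟦X|Y⟧-overlap partition of Set.range X. Then N · (min over y ∈ Set.range Y of Nat.card (X '' (Y ⁻¹' {y}))) ≤ Nat.card (Set.range X), and also N · (min over x ∈ Set.range X of Nat.card (Y '' (X ⁻¹' {x}))) ≤ Nat.card (Set.range Y). (Equivalently, the maximin information satisfies I_⋆(X;Y) ≤ L₀ˢ(X;Y) := min(L₀(X;Y), L₀(Y;X)), where L₀(X;Y) := max over y ∈ Set.range Y of log₂(Nat.card(Set.range X)/Nat.card(X '' (Y ⁻¹' {y}))).) -/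
open Set

private lemma count_lemma {α β : Type*} (T : Set β) (hT : T.Finite) (C : Set (Set α))
    (hC : C.Finite) (F : Set α → Set β) (m : ℕ)
    (hsub : ∀ s ∈ C, F s ⊆ T)
    (hdisj : ∀ s ∈ C, ∀ s' ∈ C, s ≠ s' → Disjoint (F s) (F s'))
    (hm : ∀ s ∈ C, m ≤ Nat.card (F s)) :
    Nat.card C * m ≤ Nat.card T := by
  classical
  set g : Set α → Finset β := fun s => hT.toFinset.filter (· ∈ F s) with hg
  have hgcoe : ∀ s ∈ C, (↑(g s) : Set β) = F s := by
    intro s hs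
    ext b
    simp only [hg, Finset.coe_filter, Set.Finite.mem_toFinset, mem_setOf_eq]
    exact ⟨fun h => h.2, fun h => ⟨hsub s hs h, h⟩⟩
  have hgcard : ∀ s ∈ C, (g s).card = Nat.card (F s) := by
    intro s hs
    rw [Nat.card_coe_set_eq, ← hgcoe s hs, Set.ncard_coe_finset]
  set Cf : Finset (Set α) := hC.toFinset with hCf
  have hCcard : Nat.card C = Cf.card := by
    rw [Nat.card_coe_set_eq, hCf, Set.ncard_eq_toFinset_card _ hC]
  have hmemCf : ∀ s, s ∈ Cf ↔ s ∈ C := fun s => hC.mem_toFinset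
  have hdisj' : ∀ s ∈ Cf, ∀ s' ∈ Cf, s ≠ s' → Disjoint (g s) (g s') := by
    intro s hs s' hs' hne
    rw [Finset.disjoint_left]
    intro b hb hb'
    have h1 : b ∈ F s := (Finset.mem_filter.mp hb).2
    have h2 : b ∈ F s' := (Finset.mem_filter.mp hb').2
    exact (hdisj s ((hmemCf s).mp hs) s' ((hmemCf s').mp hs') hne).le_bot ⟨h1, h2⟩
  have hbu : (Cf.biUnion g).card = ∑ s ∈ Cf, (g s).card :=
    Finset.card_biUnion hdisj'
  have hsum_le : ∑ s ∈ Cf, (g s).card ≤ Nat.card T := by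
    rw [← hbu]
    have : Cf.biUnion g ⊆ hT.toFinset := by
      intro b hb
      obtain ⟨s, _, hbs⟩ := Finset.mem_biUnion.mp hb
      exact (Finset.mem_filter.mp hbs).1
    calc (Cf.biUnion g).card ≤ hT.toFinset.card := Finset.card_le_card this
      _ = Nat.card T := by rw [Nat.card_coe_set_eq, Set.ncard_eq_toFinset_card _ hT]
  have hle_sum : Cf.card * m ≤ ∑ s ∈ Cf, (g s).card := by
    calc Cf.card * m = ∑ _s ∈ Cf, m := by rw [Finset.sum_const, smul_eq_mul, mul_comm]
      _ ≤ ∑ s ∈ Cf, (g s).card := by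
          apply Finset.sum_le_sum
          intro s hs
          rw [hgcard s ((hmemCf s).mp hs)]
          exact hm s ((hmemCf s).mp hs)
  rw [hCcard]
  exact le_trans hle_sum hsum_le

private lemma class_eq {𝕏 : Type*} (R : 𝕏 → 𝕏 → Prop) (A : Set 𝕏) {x x' : 𝕏}
    (h : Relation.EqvGen R x x') :
    {z ∈ A | Relation.EqvGen R x z} = {z ∈ A | Relation.EqvGen R x' z} := by
  ext z
  simp only [mem_setOf_eq]
  constructor
  · rintro ⟨hz, he⟩
    exact ⟨hz, Relation.EqvGen.trans _ _ _ (Relation.EqvGen.symm _ _ h) he⟩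
  · rintro ⟨hz, he⟩
    exact ⟨hz, Relation.EqvGen.trans _ _ _ h he⟩

/-- maximin information is bounded by the symmetrized non-stochastic
information leakage: the number `N` of equivalence classes of the `⟦X|Y⟧`-overlap
partition satisfies `N * min_y |⟦X|y⟧| ≤ |range X|` and
`N * min_x |⟦Y|x⟧| ≤ |range Y|`. -/
theorem maximin_le_symm_leakage {Ω 𝕏 𝕐 : Type*} [Nonempty Ω] (X : Ω → 𝕏) (Y : Ω → 𝕐)
    (hX : (Set.range X).Finite) (hY : (Set.range Y).Finite) :
    Nat.card {s : Set 𝕏 | ∃ x ∈ Set.range X,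
        s = {x' ∈ Set.range X |
          Relation.EqvGen (fun u u' => ∃ y ∈ Set.range Y,
            u ∈ X '' (Y ⁻¹' {y}) ∧ u' ∈ X '' (Y ⁻¹' {y})) x x'}} *
      sInf {m | ∃ y ∈ Set.range Y, m = Nat.card (X '' (Y ⁻¹' {y}))} ≤
      Nat.card (Set.range X) ∧
    Nat.card {s : Set 𝕏 | ∃ x ∈ Set.range X,
        s = {x' ∈ Set.range X |
          Relation.EqvGen (fun u u' => ∃ y ∈ Set.range Y,
            u ∈ X '' (Y ⁻¹' {y}) ∧ u' ∈ X '' (Y ⁻¹' {y})) x x'}} *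
      sInf {m | ∃ x ∈ Set.range X, m = Nat.card (Y '' (X ⁻¹' {x}))} ≤
      Nat.card (Set.range Y) := by
  classical
  set R : 𝕏 → 𝕏 → Prop := fun u u' => ∃ y ∈ Set.range Y,
      u ∈ X '' (Y ⁻¹' {y}) ∧ u' ∈ X '' (Y ⁻¹' {y}) with hR
  set C : Set (Set 𝕏) := {s : Set 𝕏 | ∃ x ∈ Set.range X,
      s = {x' ∈ Set.range X | Relation.EqvGen R x x'}} with hCdef
  have hCsub : ∀ s ∈ C, s ⊆ Set.range X := by
    rintro s ⟨x, hx, rfl⟩ z hz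
    exact hz.1
  have hCfin : C.Finite := hX.finite_subsets.subset hCsub
  -- key: classes with the same representative relation are equal
  have hclass : ∀ {x x' : 𝕏}, Relation.EqvGen R x x' →
      {z ∈ Set.range X | Relation.EqvGen R x z} =
      {z ∈ Set.range X | Relation.EqvGen R x' z} := fun h => class_eq R _ h
  constructor
  · -- first bound: F = id
    apply count_lemma (Set.range X) hX C hCfin id _ hCsub
    · rintro s ⟨x, hx, rfl⟩ s' ⟨x', hx', rfl⟩ hne
      rw [Set.disjoint_left]
      intro z hz hz'
      exact hne (hclass (Relation.EqvGen.trans _ _ _ hz.2 (Relation.EqvGen.symm _ _ hz'.2)))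
    · rintro s ⟨x, hx, rfl⟩
      obtain ⟨ω, rfl⟩ := hx
      set y := Y ω with hy
      have hsub' : X '' (Y ⁻¹' {y}) ⊆ {x' ∈ Set.range X | Relation.EqvGen R (X ω) x'} := by
        rintro z ⟨ω', hω', rfl⟩
        refine ⟨⟨ω', rfl⟩, Relation.EqvGen.rel _ _ ⟨y, ⟨ω, rfl⟩, ⟨ω, rfl, rfl⟩, ⟨ω', hω', rfl⟩⟩⟩
      have hfin : ({x' ∈ Set.range X | Relation.EqvGen R (X ω) x'} : Set 𝕏).Finite :=
        hX.subset (fun z hz => hz.1)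
      calc sInf {m | ∃ y ∈ Set.range Y, m = Nat.card (X '' (Y ⁻¹' {y}))}
          ≤ Nat.card (X '' (Y ⁻¹' {y})) := Nat.sInf_le ⟨y, ⟨ω, rfl⟩, rfl⟩
        _ ≤ Nat.card ({x' ∈ Set.range X | Relation.EqvGen R (X ω) x'} : Set 𝕏) := by
            rw [Nat.card_coe_set_eq, Nat.card_coe_set_eq]
            exact Set.ncard_le_ncard hsub' hfin
  · -- second bound: F s = Y '' (X ⁻¹' s)
    apply count_lemma (Set.range Y) hY C hCfin (fun s => Y '' (X ⁻¹' s)) _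
    · rintro s hs z ⟨ω, _, rfl⟩
      exact ⟨ω, rfl⟩
    · rintro s ⟨x, hx, rfl⟩ s' ⟨x', hx', rfl⟩ hne
      rw [Set.disjoint_left]
      rintro z ⟨ω, hω, rfl⟩ ⟨ω', hω', hzz⟩
      -- X ω in class of x, X ω' in class of x', Y ω = Y ω'
      have hrel : R (X ω) (X ω') :=
        ⟨Y ω, ⟨ω, rfl⟩, ⟨ω, rfl, rfl⟩, ⟨ω', hzz, rfl⟩⟩
      have : Relation.EqvGen R x x' :=
        Relation.EqvGen.trans _ _ _ hω.2
          (Relation.EqvGen.trans _ _ _ (Relation.EqvGen.rel _ _ hrel)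
            (Relation.EqvGen.symm _ _ hω'.2))
      exact hne (hclass this)
    · rintro s ⟨x, hx, rfl⟩
      obtain ⟨ω, rfl⟩ := hx
      have hxs : X ω ∈ {x' ∈ Set.range X | Relation.EqvGen R (X ω) x'} :=
        ⟨⟨ω, rfl⟩, Relation.EqvGen.refl _⟩
      have hsub' : Y '' (X ⁻¹' {X ω}) ⊆
          Y '' (X ⁻¹' {x' ∈ Set.range X | Relation.EqvGen R (X ω) x'}) := by
        rintro z ⟨ω', hω', rfl⟩
        exact ⟨ω', by rw [Set.mem_preimage, hω']; exact hxs, rfl⟩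
      have hfin : (Y '' (X ⁻¹' {x' ∈ Set.range X | Relation.EqvGen R (X ω) x'})).Finite :=
        hY.subset (by rintro z ⟨ω', _, rfl⟩; exact ⟨ω', rfl⟩)
      calc sInf {m | ∃ x ∈ Set.range X, m = Nat.card (Y '' (X ⁻¹' {x}))}
          ≤ Nat.card (Y '' (X ⁻¹' {X ω})) := Nat.sInf_le ⟨X ω, ⟨ω, rfl⟩, rfl⟩
        _ ≤ Nat.card (Y '' (X ⁻¹' {x' ∈ Set.range X | Relation.EqvGen R (X ω) x'})) := by
            rw [Nat.card_coe_set_eq, Nat.card_coe_set_eq]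
            exact Set.ncard_le_ncard hsub' hfin
end

section
/- Let Ω be a nonempty set, k ∈ ℕ, and let X : Fin k → Ω → 𝕏 and Y : Fin k → Ω → 𝕐 be families of uncertain variables with all marginal ranges finite and nonempty. Assume the memoryless-channel conditions: (i) Set.range (fun ω ↦ fun ℓ ↦ X ℓ ω) = Set.pi Set.univ (fun ℓ ↦ Set.range (X ℓ)); (ii) Set.range (fun ω ↦ fun ℓ ↦ Y ℓ ω) = Set.pi Set.univ (fun ℓ ↦ Set.range (Y ℓ)); and (iii) for every y in the joint range of Y, the joint conditional range {(fun ℓ ↦ X ℓ ω) : ω ∈ ⋂ ℓ, (Y ℓ) ⁻¹' {y ℓ}} equals Set.pi Set.univ (fun ℓ ↦ X ℓ '' ((Y ℓ) ⁻¹' {y ℓ})). Then the minimum over joint realizations y in the joint range of Y of the cardinality of the joint conditional range of (X ℓ)_ℓ equals the product over ℓ of the minimum over y_ℓ ∈ Set.range (Y ℓ) of Nat.card (X ℓ '' ((Y ℓ) ⁻¹' {y_ℓ})). Consequently the non-stochastic information leakage over the k uses satisfies L₀((X ℓ)_ℓ ; (Y ℓ)_ℓ) = Σ_ℓ L₀(X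 ℓ; Y ℓ). -/
private lemma card_univPi {k : ℕ} {β : Fin k → Type*} (s : ∀ i, Set (β i)) :
    Nat.card (Set.pi Set.univ s) = ∏ i, Nat.card (s i) := by
  rw [Nat.card_congr (Equiv.Set.univPi s), Nat.card_pi]

/-- for a memoryless uncertain channel, the minimal cardinality of the
joint conditional range factorizes as the product of the per-use minimal conditional
range cardinalities; consequently the non-stochastic information leakage over `k`
uses is the sum of the per-use leakages. -/
theorem memoryless_leakage_additive {Ω 𝕏 𝕐 : Type*} [Nonempty Ω] (k : ℕ)
    (X : Fin k → Ω → 𝕏) (Y : Fin k → Ω → 𝕐)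
    (hXfin : ∀ ℓ, (Set.range (X ℓ)).Finite)
    (hYfin : ∀ ℓ, (Set.range (Y ℓ)).Finite)
    (hXprod : Set.range (fun ω => fun ℓ => X ℓ ω) =
      Set.pi Set.univ (fun ℓ => Set.range (X ℓ)))
    (hYprod : Set.range (fun ω => fun ℓ => Y ℓ ω) =
      Set.pi Set.univ (fun ℓ => Set.range (Y ℓ)))
    (hmemoryless : ∀ y ∈ Set.range (fun ω => fun ℓ => Y ℓ ω),
      (fun ω => fun ℓ => X ℓ ω) '' (⋂ ℓ, (Y ℓ) ⁻¹' {y ℓ}) =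
        Set.pi Set.univ (fun ℓ => X ℓ '' ((Y ℓ) ⁻¹' {y ℓ}))) :
    sInf {m | ∃ y ∈ Set.range (fun ω => fun ℓ => Y ℓ ω),
        m = Nat.card ((fun ω => fun ℓ => X ℓ ω) '' (⋂ ℓ, (Y ℓ) ⁻¹' {y ℓ}))} =
      ∏ ℓ : Fin k, sInf {m | ∃ yl ∈ Set.range (Y ℓ),
        m = Nat.card (X ℓ '' ((Y ℓ) ⁻¹' {yl}))} ∧
    Real.logb 2 ((Nat.card (Set.range (fun ω => fun ℓ => X ℓ ω)) : ℝ) /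
        (sInf {m | ∃ y ∈ Set.range (fun ω => fun ℓ => Y ℓ ω),
          m = Nat.card ((fun ω => fun ℓ => X ℓ ω) '' (⋂ ℓ, (Y ℓ) ⁻¹' {y ℓ}))} : ℕ)) =
      ∑ ℓ : Fin k, Real.logb 2 ((Nat.card (Set.range (X ℓ)) : ℝ) /
        (sInf {m | ∃ yl ∈ Set.range (Y ℓ),
          m = Nat.card (X ℓ '' ((Y ℓ) ⁻¹' {yl}))} : ℕ)) := by
  -- notation
  set g : ∀ ℓ : Fin k, 𝕐 → ℕ := fun ℓ y => Nat.card (X ℓ '' ((Y ℓ) ⁻¹' {y})) with hg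
  set S : Fin k → Set ℕ := fun ℓ => {m | ∃ yl ∈ Set.range (Y ℓ), m = g ℓ yl} with hS
  set T : Set ℕ := {m | ∃ y ∈ Set.range (fun ω => fun ℓ => Y ℓ ω),
      m = Nat.card ((fun ω => fun ℓ => X ℓ ω) '' (⋂ ℓ, (Y ℓ) ⁻¹' {y ℓ}))} with hT
  -- positivity of each g ℓ y for y in range
  have hgpos : ∀ ℓ, ∀ y ∈ Set.range (Y ℓ), 0 < g ℓ y := by
    intro ℓ y hy
    obtain ⟨ω, hω⟩ := hy
    have hne : (X ℓ '' ((Y ℓ) ⁻¹' {y})).Nonempty := ⟨X ℓ ω, ω, hω, rfl⟩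
    have hfin : (X ℓ '' ((Y ℓ) ⁻¹' {y})).Finite :=
      (hXfin ℓ).subset ((Set.image_subset_range _ _).trans (by simp))
    exact Nat.card_pos_iff.mpr ⟨hne.to_subtype, hfin.to_subtype⟩
  -- S ℓ nonempty and its sInf attained
  have hSne : ∀ ℓ, (S ℓ).Nonempty := fun ℓ => by
    obtain ⟨ω⟩ := ‹Nonempty Ω›
    exact ⟨g ℓ (Y ℓ ω), ⟨Y ℓ ω, ⟨ω, rfl⟩, rfl⟩⟩
  have hSinf : ∀ ℓ, sInf (S ℓ) ∈ S ℓ := fun ℓ => Nat.sInf_mem (hSne ℓ)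
  have hSpos : ∀ ℓ, 0 < sInf (S ℓ) := by
    intro ℓ
    obtain ⟨yl, hyl, hEq⟩ := hSinf ℓ
    rw [hEq]; exact hgpos ℓ yl hyl
  -- factorization of joint conditional card
  have hfact : ∀ y ∈ Set.range (fun ω => fun ℓ => Y ℓ ω),
      Nat.card ((fun ω => fun ℓ => X ℓ ω) '' (⋂ ℓ, (Y ℓ) ⁻¹' {y ℓ})) = ∏ ℓ, g ℓ (y ℓ) := by
    intro y hy
    rw [hmemoryless y hy, card_univPi]
  -- membership in joint range means each coordinate in range
  have hcoord : ∀ y ∈ Set.range (fun ω => fun ℓ => Y ℓ ω), ∀ ℓ, y ℓ ∈ Set.range (Y ℓ) := by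
    intro y hy ℓ
    rw [hYprod] at hy
    exact hy ℓ (Set.mem_univ ℓ)
  -- first conjunct
  have hmain : sInf T = ∏ ℓ, sInf (S ℓ) := by
    -- choose minimizers
    choose ystar hystar hysEq using hSinf
    have hymem : (fun ℓ => ystar ℓ) ∈ Set.range (fun ω => fun ℓ => Y ℓ ω) := by
      rw [hYprod]; intro ℓ _; exact hystar ℓ
    have hTne : (∏ ℓ, sInf (S ℓ)) ∈ T := by
      refine ⟨fun ℓ => ystar ℓ, hymem, ?_⟩
      rw [hfact _ hymem]
      exact Finset.prod_congr rfl fun ℓ _ => hysEq ℓ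
    have h1 : sInf T ≤ ∏ ℓ, sInf (S ℓ) := Nat.sInf_le hTne
    have h2 : ∏ ℓ, sInf (S ℓ) ≤ sInf T := by
      obtain ⟨y0, hy0, hEq⟩ := Nat.sInf_mem ⟨_, hTne⟩
      rw [hEq, hfact _ hy0]
      exact Finset.prod_le_prod' fun ℓ _ => Nat.sInf_le ⟨y0 ℓ, hcoord _ hy0 ℓ, rfl⟩
    exact le_antisymm h1 h2
  refine ⟨hmain, ?_⟩
  -- second conjunct
  have hXcard : Nat.card (Set.range (fun ω => fun ℓ => X ℓ ω)) =
      ∏ ℓ, Nat.card (Set.range (X ℓ)) := by rw [hXprod, card_univPi]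
  have hXpos : ∀ ℓ, 0 < Nat.card (Set.range (X ℓ)) := fun ℓ =>
    Nat.card_pos_iff.mpr ⟨(Set.range_nonempty _).to_subtype, (hXfin ℓ).to_subtype⟩
  rw [hXcard, hmain]
  push_cast
  rw [← Finset.prod_div_distrib]
  rw [Real.logb_prod]
  intro ℓ _
  exact div_ne_zero (by exact_mod_cast (hXpos ℓ).ne') (by exact_mod_cast (hSpos ℓ).ne')
end

section
/- Let X : Ω → (∀ i : Fin n, 𝕏 i) be a dataset on a nonempty set Ω with each Set.range X_i finite, and let g : (∀ i, 𝕏 i) → 𝕐 be an m-noiselessly private mechanism with respect to X, where m ≥ 1. Fix an individual i : Fin n and a vector v : ∀ j, 𝕏 j, and define the output uncertain variable Y : Ω → 𝕐 by Y ω := g (Function.update v i (X ω i)). Then Nat.card (Set.range Y) ≤ m, and moreover the number of equivalence classes of the ⟦X_i|Y⟧-overlap partition of Set.range X_i is at most m. (Equivalently, with m = 2^ε, the chain 0 ≤ I_⋆(X_i;Y) ≤ L₀ˢ(X_i;Y) ≤ L₀(Y;X_i) ≤ ε holds.) -/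
/-- `g` is `m`-noiselessly private w.r.t. the dataset `X` if, for every individual `i`
and every fixing `v` of the other entries, the set of attainable outputs while varying
the data of individual `i` has at most `m` elements. (`m` plays the role of `2^ε`.) -/
def NoiselesslyPrivate {Ω : Type*} {n : ℕ} {𝕏 : Fin n → Type*} {𝕐 : Type*}
    (X : Ω → ∀ i, 𝕏 i) (g : (∀ i, 𝕏 i) → 𝕐) (m : ℕ) : Prop :=
  ∀ (i : Fin n) (v : ∀ j, 𝕏 j),
    Nat.card ((fun t => g (Function.update v i t)) '' Set.range (fun ω => X ω i)) ≤ m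

/-- for an `m`-noiselessly private mechanism, the output uncertain
variable `Y` (with the other entries fixed to `v`) has at most `m` realizations, and
the `⟦X_i|Y⟧`-overlap partition has at most `m` classes (maximin information ≤ ε). -/
theorem noiseless_privacy_information_leakage {Ω : Type*} [Nonempty Ω] {n : ℕ}
    {𝕏 : Fin n → Type*} {𝕐 : Type*}
    (X : Ω → ∀ i, 𝕏 i) (hfin : ∀ i, (Set.range (fun ω => X ω i)).Finite)
    (g : (∀ i, 𝕏 i) → 𝕐) (m : ℕ) (hm : 1 ≤ m)
    (hpriv : NoiselesslyPrivate X g m)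
    (i : Fin n) (v : ∀ j, 𝕏 j) :
    Nat.card (Set.range (fun ω => g (Function.update v i (X ω i)))) ≤ m ∧
    Nat.card {s : Set (𝕏 i) | ∃ x ∈ Set.range (fun ω => X ω i),
        s = {x' ∈ Set.range (fun ω => X ω i) |
          Relation.EqvGen (fun u u' => ∃ y ∈ Set.range (fun ω => g (Function.update v i (X ω i))),
            u ∈ (fun ω => X ω i) '' ((fun ω => g (Function.update v i (X ω i))) ⁻¹' {y}) ∧
            u' ∈ (fun ω => X ω i) '' ((fun ω => g (Function.update v i (X ω i))) ⁻¹' {y}))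
          x x'}} ≤ m := by
  classical
  set Y : Ω → 𝕐 := fun ω => g (Function.update v i (X ω i)) with hYdef
  set A : Ω → 𝕏 i := fun ω => X ω i with hAdef
  set R : 𝕏 i → 𝕏 i → Prop := fun u u' => ∃ y ∈ Set.range Y,
    u ∈ A '' (Y ⁻¹' {y}) ∧ u' ∈ A '' (Y ⁻¹' {y}) with hRdef
  have hrange : Set.range Y = (fun t => g (Function.update v i t)) '' Set.range A := by
    rw [← Set.range_comp]; rfl
  have h1 : Nat.card (Set.range Y) ≤ m := by rw [hrange]; exact hpriv i v
  have hYfin : (Set.range Y).Finite := by rw [hrange]; exact (hfin i).image _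
  refine ⟨h1, ?_⟩
  set C : 𝕏 i → Set (𝕏 i) :=
    fun x => {x' ∈ Set.range A | Relation.EqvGen R x x'} with hCdef
  have hclass : ∀ x1 x2, Relation.EqvGen R x1 x2 → C x1 = C x2 := by
    intro x1 x2 h
    ext z
    simp only [hCdef, Set.mem_setOf_eq, Set.mem_sep_iff]
    exact ⟨fun ⟨hz, hr⟩ => ⟨hz, Relation.EqvGen.trans _ _ _ (Relation.EqvGen.symm _ _ h) hr⟩,
      fun ⟨hz, hr⟩ => ⟨hz, Relation.EqvGen.trans _ _ _ h hr⟩⟩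
  have hgoal : Nat.card {s : Set (𝕏 i) | ∃ x ∈ Set.range A, s = C x} ≤ m := by
    set S : Set (Set (𝕏 i)) := {s | ∃ x ∈ Set.range A, s = C x} with hSdef
    set F : Set (𝕏 i) → 𝕐 := fun s =>
      if h : ∃ x, x ∈ Set.range A ∧ s = C x then g (Function.update v i h.choose)
      else g v with hFdef
    have key : ∀ s ∈ S, ∃ ω, F s = Y ω ∧ s = C (A ω) := by
      intro s hs
      have h : ∃ x, x ∈ Set.range A ∧ s = C x := by
        obtain ⟨x, hx, hsx⟩ := hs; exact ⟨x, hx, hsx⟩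
      obtain ⟨ω, hω⟩ := h.choose_spec.1
      refine ⟨ω, ?_, ?_⟩
      · rw [hFdef]; simp only [dif_pos h]
        rw [← hω]
      · rw [h.choose_spec.2, ← hω]
    have hmaps : Set.MapsTo F S (Set.range Y) := by
      intro s hs
      obtain ⟨ω, hF, _⟩ := key s hs
      exact ⟨ω, hF.symm⟩
    have hinj : Set.InjOn F S := by
      intro s1 hs1 s2 hs2 hF
      obtain ⟨ω1, hF1, hC1⟩ := key s1 hs1
      obtain ⟨ω2, hF2, hC2⟩ := key s2 hs2
      have hyy : Y ω1 = Y ω2 := by rw [← hF1, ← hF2, hF]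
      have hrel : R (A ω1) (A ω2) :=
        ⟨Y ω1, ⟨ω1, rfl⟩, ⟨ω1, rfl, rfl⟩, ⟨ω2, hyy.symm, rfl⟩⟩
      rw [hC1, hC2, hclass _ _ (Relation.EqvGen.rel _ _ hrel)]
    calc Nat.card S = S.ncard := Nat.card_coe_set_eq S
      _ ≤ (Set.range Y).ncard := Set.ncard_le_ncard_of_injOn F hmaps hinj hYfin
      _ = Nat.card (Set.range Y) := (Nat.card_coe_set_eq _).symm
      _ ≤ m := h1
  exact hgoal
end

section
/- Let X : Ω → (∀ i : Fin n, 𝕏 i) be a dataset on a nonempty set Ω and let g : (∀ i, 𝕏 i) → 𝕐 be an m-noiselessly private mechanism with respect to X, where m ≥ 1. Fix an individual i : Fin n, a block length k ∈ ℕ, and a sequence of side-information vectors v : Fin k → (∀ j, 𝕏 j). Let 𝔽 be a finite set of codewords c : Fin k → 𝕏 i with c ℓ ∈ Set.range X_i for every ℓ, and suppose the channel encoding map c ↦ (fun ℓ ↦ g (Function.update (v ℓ) i (c ℓ))) is injective on 𝔽 (zero-error decodability: distinct codewords produce distinct output sequences). Then Nat.card 𝔽 ≤ m^k; that is, the zero-error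 communication rate log₂(Nat.card 𝔽)/k through the memoryless m-noiselessly-private channel is at most log₂ m. -/
/-- any zero-error code `𝔽` of block length `k` through a memoryless
`m`-noiselessly-private channel has at most `m ^ k` codewords, i.e. the zero-error
capacity is at most `log₂ m = ε`. -/
theorem noiseless_privacy_zero_error_capacity {Ω : Type*} [Nonempty Ω] {n : ℕ}
    {𝕏 : Fin n → Type*} {𝕐 : Type*}
    (X : Ω → ∀ i, 𝕏 i) (hfin : ∀ i, (Set.range (fun ω => X ω i)).Finite)
    (g : (∀ i, 𝕏 i) → 𝕐) (m : ℕ) (hm : 1 ≤ m)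
    (hpriv : NoiselesslyPrivate X g m)
    (i : Fin n) (k : ℕ) (v : Fin k → ∀ j, 𝕏 j)
    (F : Set (Fin k → 𝕏 i)) (hFfin : F.Finite)
    (hFmem : ∀ c ∈ F, ∀ ℓ, c ℓ ∈ Set.range (fun ω => X ω i))
    (hinj : Set.InjOn (fun c => fun ℓ => g (Function.update (v ℓ) i (c ℓ))) F) :
    Nat.card F ≤ m ^ k := by
  classical
  set S : Fin k → Set 𝕐 :=
    fun ℓ => (fun t => g (Function.update (v ℓ) i t)) '' Set.range (fun ω => X ω i) with hS
  have hSfin : ∀ ℓ, (S ℓ).Finite := fun ℓ => (hfin i).image _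
  have hScard : ∀ ℓ, Nat.card (S ℓ) ≤ m := fun ℓ => hpriv i (v ℓ)
  let φ : F → ∀ ℓ, S ℓ := fun c ℓ =>
    ⟨g (Function.update (v ℓ) i (c.1 ℓ)), ⟨c.1 ℓ, hFmem c.1 c.2 ℓ, rfl⟩⟩
  have hφ : Function.Injective φ := by
    intro a b hab
    apply Subtype.ext
    apply hinj a.2 b.2
    funext ℓ
    exact congrArg Subtype.val (congrFun hab ℓ)
  haveI : ∀ ℓ, Finite (S ℓ) := fun ℓ => (hSfin ℓ).to_subtype
  calc Nat.card F ≤ Nat.card (∀ ℓ, S ℓ) := Nat.card_le_card_of_injective φ hφ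
    _ = ∏ ℓ, Nat.card (S ℓ) := Nat.card_pi
    _ ≤ ∏ _ℓ : Fin k, m :=
        Finset.prod_le_prod (fun _ _ => Nat.zero_le _) (fun ℓ _ => hScard ℓ)
    _ = m ^ k := by simp
end

section
/- Let Ω be a nonempty set, X : Ω → 𝕏 an uncertain variable, g_Y : 𝕏 → 𝕐 a measurement map, and g_H : 𝕏 → Bool a hypothesis map; set Y := g_Y ∘ X and H := g_H ∘ X. For a test T : 𝕐 → Bool, define the correctness set ℵ(T) := {y ∈ Set.range Y | H '' (Y ⁻¹' {y}) = {T y}}. Then ℵ(T) ⊆ (Y '' (H ⁻¹' {false})) Δ (Y '' (H ⁻¹' {true})), where Δ denotes symmetric difference of sets; in particular, if these sets are finite then Nat.card (ℵ(T)) ≤ Nat.card ((Y '' (H ⁻¹' {false})) Δ (Y '' (H ⁻¹' {true}))), i.e., the performance 𝒫(T) := log₂(Nat.card ℵ(T)) of any test is bounded by log₂ of the cardinality of the symmetric difference of the two conditional output ranges. -/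
/-- the correctness set of any non-stochastic hypothesis test is contained
in the symmetric difference of the two conditional output ranges; in particular (for
finite such sets) its cardinality is bounded by that of the symmetric difference. -/
theorem hypothesis_test_performance_bound {Ω 𝕏 𝕐 : Type*} [Nonempty Ω]
    (X : Ω → 𝕏) (gY : 𝕏 → 𝕐) (gH : 𝕏 → Bool) (T : 𝕐 → Bool) :
    {y ∈ Set.range (gY ∘ X) | (gH ∘ X) '' ((gY ∘ X) ⁻¹' {y}) = {T y}} ⊆
      symmDiff ((gY ∘ X) '' ((gH ∘ X) ⁻¹' {false})) ((gY ∘ X) '' ((gH ∘ X) ⁻¹' {true})) ∧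
    ((symmDiff ((gY ∘ X) '' ((gH ∘ X) ⁻¹' {false}))
        ((gY ∘ X) '' ((gH ∘ X) ⁻¹' {true}))).Finite →
      Nat.card ({y ∈ Set.range (gY ∘ X) |
          (gH ∘ X) '' ((gY ∘ X) ⁻¹' {y}) = {T y}} : Set 𝕐) ≤
        Nat.card ((symmDiff ((gY ∘ X) '' ((gH ∘ X) ⁻¹' {false}))
          ((gY ∘ X) '' ((gH ∘ X) ⁻¹' {true}))) : Set 𝕐)) := by
  have hsub : {y ∈ Set.range (gY ∘ X) | (gH ∘ X) '' ((gY ∘ X) ⁻¹' {y}) = {T y}} ⊆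
      symmDiff ((gY ∘ X) '' ((gH ∘ X) ⁻¹' {false})) ((gY ∘ X) '' ((gH ∘ X) ⁻¹' {true})) := by
    rintro y ⟨⟨ω, hω⟩, himg⟩
    have hmem : ∀ b, y ∈ (gY ∘ X) '' ((gH ∘ X) ⁻¹' {b}) ↔ b = T y := by
      intro b
      constructor
      · rintro ⟨x, hx, rfl⟩
        have h1 : gH (X x) ∈ (gH ∘ X) '' ((gY ∘ X) ⁻¹' {(gY ∘ X) x}) := ⟨x, rfl, rfl⟩
        rw [himg, Set.mem_singleton_iff] at h1
        have hb : gH (X x) = b := hx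
        exact hb.symm.trans h1
      · rintro rfl
        have : T y ∈ (gH ∘ X) '' ((gY ∘ X) ⁻¹' {y}) := by rw [himg]; rfl
        obtain ⟨x, hx, hx2⟩ := this
        exact ⟨x, hx2, hx⟩
    rw [Set.mem_symmDiff]
    cases hTy : T y with
    | false => exact Or.inl ⟨(hmem false).2 hTy.symm, fun h => by simpa [hTy] using (hmem true).1 h⟩
    | true => exact Or.inr ⟨(hmem true).2 hTy.symm, fun h => by simpa [hTy] using (hmem false).1 h⟩
  exact ⟨hsub, fun hfin => Nat.card_mono hfin hsub⟩
end

section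
/- Let Ω be a nonempty set, X : Ω → 𝕏 an uncertain variable, g_Y : 𝕏 → ℝ a real-valued measurement map, and g_H : 𝕏 → Bool a hypothesis map; set Y := g_Y ∘ X and H := g_H ∘ X. For a test T : ℝ → Bool, define the correctness set ℵ(T) := {y ∈ Set.range Y | H '' (Y ⁻¹' {y}) = {T y}}. Then the Lebesgue measure satisfies volume (ℵ(T)) ≤ volume ((Y '' (H ⁻¹' {false})) Δ (Y '' (H ⁻¹' {true}))), where Δ denotes symmetric difference; i.e., the performance 𝒫(T) := log(volume(ℵ(T))) of any test on a continuous measurement is bounded by log of the Lebesgue measure of the symmetric difference of the two conditional output ranges. -/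
open MeasureTheory

/-- for a continuous (real-valued) measurement, the Lebesgue measure of
the correctness set of any non-stochastic hypothesis test is bounded by the Lebesgue
measure of the symmetric difference of the two conditional output ranges. -/
theorem hypothesis_test_performance_bound_continuous {Ω 𝕏 : Type*} [Nonempty Ω]
    (X : Ω → 𝕏) (gY : 𝕏 → ℝ) (gH : 𝕏 → Bool) (T : ℝ → Bool) :
    volume ({y ∈ Set.range (gY ∘ X) | (gH ∘ X) '' ((gY ∘ X) ⁻¹' {y}) = {T y}} : Set ℝ) ≤
      volume ((symmDiff ((gY ∘ X) '' ((gH ∘ X) ⁻¹' {false}))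
        ((gY ∘ X) '' ((gH ∘ X) ⁻¹' {true}))) : Set ℝ) := by
  apply measure_mono
  rintro y ⟨⟨ω, hω⟩, himg⟩
  -- y ∈ image of H⁻¹'{T y}
  have hmem : y ∈ (gY ∘ X) '' ((gH ∘ X) ⁻¹' {T y}) := by
    have : (T y) ∈ (gH ∘ X) '' ((gY ∘ X) ⁻¹' {y}) := by
      rw [himg]; rfl
    obtain ⟨ω', hω', hH⟩ := this
    exact ⟨ω', hH, hω'⟩
  have hnot : y ∉ (gY ∘ X) '' ((gH ∘ X) ⁻¹' {!T y}) := by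
    rintro ⟨ω', hH, hY⟩
    have : (!T y) ∈ (gH ∘ X) '' ((gY ∘ X) ⁻¹' {y}) := ⟨ω', hY, hH⟩
    rw [himg] at this
    simp at this
  rw [Set.symmDiff_def]
  cases hT : T y
  · left
    constructor
    · rw [hT] at hmem; exact hmem
    · rw [hT] at hnot; exact hnot
  · right
    constructor
    · rw [hT] at hmem; exact hmem
    · rw [hT] at hnot; exact hnot
end

section
/- Let X : Ω → (∀ i : Fin n, 𝕏 i) be a dataset on a nonempty set Ω and let g : (∀ i, 𝕏 i) → 𝕐 be an m-noiselessly private mechanism with respect to X, where m ≥ 1. Fix i : Fin n, two candidate values a, b ∈ Set.range X_i, and a vector v : ∀ j, 𝕏 j. Let X̄ : Ω → (∀ j, 𝕏 j) be any uncertain variable with X̄ ω i ∈ {a, b} for all ω, define the output Y ω := g (Function.update v i (X̄ ω i)) and the hypothesis H ω := decide (X̄ ω i = b). Then for every test T : 𝕐 → Bool, the correctness set ℵ(T) := {y ∈ Set.range Y | H '' (Y ⁻¹' {y}) = {T y}} satisfies Nat.card (ℵ(T)) ≤ m; that is, the performance 𝒫(T) = log₂(Nat.card ℵ(T)) of any non-stochastic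 hypothesis-testing adversary is at most the privacy budget log₂ m. -/
/-- against an `m`-noiselessly private mechanism, the correctness set of
any non-stochastic hypothesis-testing adversary (testing whether the data of
individual `i` equals `a` or `b`, with all other entries fixed to `v`) has at most `m`
elements, i.e. the test performance is at most the privacy budget `log₂ m`. -/
theorem noiseless_privacy_hypothesis_testing {Ω : Type*} [Nonempty Ω] {n : ℕ}
    {𝕏 : Fin n → Type*} [∀ j, DecidableEq (𝕏 j)] {𝕐 : Type*}
    (X : Ω → ∀ i, 𝕏 i) (hfin : ∀ i, (Set.range (fun ω => X ω i)).Finite)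
    (g : (∀ i, 𝕏 i) → 𝕐) (m : ℕ) (hm : 1 ≤ m)
    (hpriv : NoiselesslyPrivate X g m)
    (i : Fin n) (a b : 𝕏 i)
    (ha : a ∈ Set.range (fun ω => X ω i)) (hb : b ∈ Set.range (fun ω => X ω i))
    (v : ∀ j, 𝕏 j)
    (Xbar : Ω → ∀ j, 𝕏 j) (hXbar : ∀ ω, Xbar ω i ∈ ({a, b} : Set (𝕏 i)))
    (T : 𝕐 → Bool) :
    Nat.card ({y ∈ Set.range (fun ω => g (Function.update v i (Xbar ω i))) |
        (fun ω => decide (Xbar ω i = b)) ''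
          ((fun ω => g (Function.update v i (Xbar ω i))) ⁻¹' {y}) = {T y}} : Set 𝕐) ≤
      m := by
  set S := (fun t => g (Function.update v i t)) '' Set.range (fun ω => X ω i) with hS
  have hSfin : S.Finite := ((hfin i).image _)
  have hsub : ({y ∈ Set.range (fun ω => g (Function.update v i (Xbar ω i))) |
        (fun ω => decide (Xbar ω i = b)) ''
          ((fun ω => g (Function.update v i (Xbar ω i))) ⁻¹' {y}) = {T y}} : Set 𝕐) ⊆ S := by
    rintro y ⟨⟨ω, rfl⟩, -⟩
    rcases hXbar ω with h | h
    · exact ⟨Xbar ω i, h ▸ ha, rfl⟩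
    · exact ⟨Xbar ω i, h ▸ hb, rfl⟩
  exact le_trans (Nat.card_mono hSfin hsub) (hpriv i v)
end

section
/- For every natural number p, all real numbers a ≤ b, and every real number c, the interval integral satisfies ∫ z in a..b, |z - c|^p dz ≥ (b - a)^(p+1) / 2^(2p+1), i.e., ∫ z in a..b, |z - c|^p dz ≥ 2 · ((b - a)/4)^(p+1). -/
/-!
On the half of `[a, b]` lying on the far side of `c` from the midpoint `m`, the integrand
`|z - c| ^ p` dominates `|z - m| ^ p`, whose integral over that half is
`((b - a) / 2) ^ (p + 1) / (p + 1)`. Reflecting `z ↦ a + b - z` reduces to the case `c ≤ m`,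
and `p + 1 ≤ 2 ^ p` gives the stated constant.
-/

open intervalIntegral MeasureTheory

lemma pow_div_succ_le_integral_abs_sub_pow (p : ℕ) {c m b : ℝ} (hcm : c ≤ m) (hmb : m ≤ b) :
    (b - m) ^ (p + 1) / (p + 1) ≤ ∫ z in m..b, |z - c| ^ p := by
  calc (b - m) ^ (p + 1) / (p + 1) = ∫ z in m..b, (z - m) ^ p := by
        rw [integral_comp_sub_right (· ^ p), integral_pow]
        simp
    _ ≤ ∫ z in m..b, |z - c| ^ p := by
        refine integral_mono_on hmb (Continuous.intervalIntegrable (by fun_prop) _ _)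
          (Continuous.intervalIntegrable (by fun_prop) _ _) fun z hz => ?_
        exact pow_le_pow_left₀ (sub_nonneg.2 hz.1)
          ((sub_le_sub_left hcm z).trans (le_abs_self _)) p

lemma integral_abs_sub_reflect_pow (p : ℕ) (a b c : ℝ) :
    ∫ z in a..b, |z - (a + b - c)| ^ p = ∫ z in a..b, |z - c| ^ p := by
  have hreflect := integral_comp_sub_left (a := a) (b := b) (fun z => |z - c| ^ p) (a + b)
  simp only [add_sub_cancel_right, add_sub_cancel_left] at hreflect
  rw [← hreflect]
  congr 1 with z
  rw [show a + b - z - c = -(z - (a + b - c)) by ring, abs_neg]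

lemma half_width_pow_div_succ_le_integral_abs_sub_pow_of_le_midpoint (p : ℕ) {a b c : ℝ}
    (hab : a ≤ b) (hc : c ≤ (a + b) / 2) :
    ((b - a) / 2) ^ (p + 1) / (p + 1) ≤ ∫ z in a..b, |z - c| ^ p := by
  set m := (a + b) / 2 with hm
  have hcont : Continuous fun z : ℝ => |z - c| ^ p := by fun_prop
  have hsplit := integral_add_adjacent_intervals (hcont.intervalIntegrable (μ := volume) a m)
    (hcont.intervalIntegrable m b)
  have hleft : 0 ≤ ∫ z in a..m, |z - c| ^ p :=
    integral_nonneg (by linarith [hm]) fun z _ => by positivity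
  have hright := pow_div_succ_le_integral_abs_sub_pow p hc (by linarith [hm] : m ≤ b)
  rw [show b - m = (b - a) / 2 by ring] at hright
  linarith

lemma half_width_pow_div_succ_le_integral_abs_sub_pow (p : ℕ) {a b : ℝ} (c : ℝ) (hab : a ≤ b) :
    ((b - a) / 2) ^ (p + 1) / (p + 1) ≤ ∫ z in a..b, |z - c| ^ p := by
  rcases le_total c ((a + b) / 2) with hc | hc
  · exact half_width_pow_div_succ_le_integral_abs_sub_pow_of_le_midpoint p hab hc
  · rw [← integral_abs_sub_reflect_pow]
    exact half_width_pow_div_succ_le_integral_abs_sub_pow_of_le_midpoint p hab (by linarith)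

lemma pow_div_two_pow_le_half_pow_div_succ (p : ℕ) {x : ℝ} (hx : 0 ≤ x) :
    x ^ (p + 1) / 2 ^ (2 * p + 1) ≤ (x / 2) ^ (p + 1) / (p + 1) := by
  have hsucc : (p + 1 : ℝ) ≤ 2 ^ p := by exact_mod_cast Nat.lt_two_pow_self
  rw [show x ^ (p + 1) / 2 ^ (2 * p + 1) = (x / 2) ^ (p + 1) / 2 ^ p by
    rw [div_pow, div_div, ← pow_add]; ring_nf]
  gcongr

/-- moment lower bound: for any exponent `p`, interval `[a, b]` and
center `c`, `∫ z in a..b, |z - c|^p dz ≥ (b - a)^(p+1) / 2^(2p+1)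
            = 2 * ((b - a)/4)^(p+1)`. -/
theorem interval_moment_lower_bound (p : ℕ) (a b c : ℝ) (hab : a ≤ b) :
    (b - a) ^ (p + 1) / 2 ^ (2 * p + 1) ≤ ∫ z in a..b, |z - c| ^ p :=
  (pow_div_two_pow_le_half_pow_div_succ p (sub_nonneg.2 hab)).trans
    (half_width_pow_div_succ_le_integral_abs_sub_pow p c hab)
end

section
/- Let α < β be real numbers and S := Set.Icc α β. Let ξ : ℝ → ℝ be a measurable function and ρ > 0 with ξ x ≥ ρ for all x ∈ S (a probability density bounded below on the data range). Let g : ℝ → 𝕐 be a function (the mechanism restricted to the data of individual i) such that Nat.card (g '' S) ≤ k for some k ≥ 1 and such that for every y ∈ 𝕐 the fiber S ∩ g ⁻¹' {y} is order-connected (an interval). Then for every estimator h : 𝕐 → ℝ and every natural number p, ∫⁻ x in S, ENNReal.ofReal (|x - h (g x)|^p · ξ x) ∂volume ≥ ENNReal.ofReal (ρ · (β - α)^(p+1) / (k^(p+1) · 2^(2p+2))). That is, the p-th moment of the estimation error of any adversary estimating the private value x from the k-valued (i.e., ε-noiselessly private with k = 2^ε) output g x is at least ρ · μ(S)^(p+1)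 · 2^{-ε(p+1)} / 2^(2p+2). -/
open MeasureTheory

/-- an adversary with a stochastic prior (density `ξ ≥ ρ > 0` on
`S = [α, β]`) estimating the private value `x` from the output of a `k`-valued
(`ε`-noiselessly private, `k = 2^ε`) mechanism `g` with connected fibers incurs a
`p`-th moment estimation error at least `ρ (β - α)^(p+1) / (k^(p+1) 2^(2p+2))`. -/
theorem noiseless_privacy_estimation_error {𝕐 : Type*}
    (α β : ℝ) (hαβ : α < β) (ξ : ℝ → ℝ) (hξmeas : Measurable ξ)
    (ρ : ℝ) (hρ : 0 < ρ) (hξ : ∀ x ∈ Set.Icc α β, ρ ≤ ξ x)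
    (g : ℝ → 𝕐) (k : ℕ) (hk : 1 ≤ k)
    (hfin : (g '' Set.Icc α β).Finite)
    (hcard : Nat.card (g '' Set.Icc α β) ≤ k)
    (hconn : ∀ y : 𝕐, (Set.Icc α β ∩ g ⁻¹' {y}).OrdConnected)
    (h : 𝕐 → ℝ) (p : ℕ) :
    ENNReal.ofReal (ρ * (β - α) ^ (p + 1) / ((k : ℝ) ^ (p + 1) * 2 ^ (2 * p + 2))) ≤
      ∫⁻ x in Set.Icc α β, ENNReal.ofReal (|x - h (g x)| ^ p * ξ x) ∂volume := by
  set S := Set.Icc α β with hS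
  have hβα : (0:ℝ) < β - α := by linarith
  have hkpos : (0:ℝ) < k := by exact_mod_cast hk
  set δ : ℝ := (β - α) / (4 * k) with hδdef
  have hδ : 0 < δ := div_pos hβα (by positivity)
  set T : Finset 𝕐 := hfin.toFinset with hT
  have hTcard : T.card ≤ k := by
    rw [hT, ← Nat.card_eq_card_finite_toFinset hfin]; exact hcard
  set B : Set ℝ := ⋃ y ∈ T, ((S ∩ g ⁻¹' {y}) ∩ Set.Ioo (h y - δ) (h y + δ)) with hBdef
  have hBmeas : MeasurableSet B := by
    refine T.measurableSet_biUnion fun y _ => ?_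
    exact ((hconn y).measurableSet).inter measurableSet_Ioo
  have hBvol : volume B ≤ ENNReal.ofReal ((β - α) / 2) := by
    calc volume B ≤ ∑ y ∈ T, volume ((S ∩ g ⁻¹' {y}) ∩ Set.Ioo (h y - δ) (h y + δ)) :=
          measure_biUnion_finset_le _ _
      _ ≤ ∑ y ∈ T, ENNReal.ofReal (2 * δ) := by
          refine Finset.sum_le_sum fun y _ => ?_
          calc volume ((S ∩ g ⁻¹' {y}) ∩ Set.Ioo (h y - δ) (h y + δ))
              ≤ volume (Set.Ioo (h y - δ) (h y + δ)) :=
                measure_mono Set.inter_subset_right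
            _ = ENNReal.ofReal (2 * δ) := by rw [Real.volume_Ioo]; ring_nf
      _ = T.card * ENNReal.ofReal (2 * δ) := by
          rw [Finset.sum_const, nsmul_eq_mul]
      _ ≤ k * ENNReal.ofReal (2 * δ) := by
          exact mul_le_mul_left (by exact_mod_cast hTcard) _
      _ = ENNReal.ofReal ((β - α) / 2) := by
          rw [← ENNReal.ofReal_natCast, ← ENNReal.ofReal_mul (by positivity)]
          congr 1
          rw [hδdef]
          field_simp
          ring
  set A : Set ℝ := S \ B with hAdef
  have hAmeas : MeasurableSet A := measurableSet_Icc.diff hBmeas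
  have hAvol : ENNReal.ofReal ((β - α) / 2) ≤ volume A := by
    have h1 : volume S - volume B ≤ volume A := le_measure_diff
    have h2 : ENNReal.ofReal ((β - α) / 2) ≤ volume S - volume B := by
      rw [hS, Real.volume_Icc]
      calc ENNReal.ofReal ((β - α) / 2)
          = ENNReal.ofReal (β - α) - ENNReal.ofReal ((β - α) / 2) := by
            rw [← ENNReal.ofReal_sub _ (by positivity)]; ring_nf
        _ ≤ ENNReal.ofReal (β - α) - volume B := tsub_le_tsub le_rfl hBvol
    exact h2.trans h1
  have hpoint : ∀ x ∈ A, ENNReal.ofReal (ρ * δ ^ p) ≤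
      ENNReal.ofReal (|x - h (g x)| ^ p * ξ x) := by
    intro x hx
    obtain ⟨hxS, hxB⟩ := hx
    have hgx : g x ∈ T := by
      rw [hT, Set.Finite.mem_toFinset]; exact ⟨x, hxS, rfl⟩
    have hnot : x ∉ Set.Ioo (h (g x) - δ) (h (g x) + δ) := by
      intro hmem
      exact hxB (Set.mem_biUnion hgx ⟨⟨hxS, rfl⟩, hmem⟩)
    have hdist : δ ≤ |x - h (g x)| := by
      rw [Set.mem_Ioo, not_and_or, not_lt, not_lt] at hnot
      rcases hnot with h1 | h1
      · rw [abs_sub_comm, abs_of_nonneg (by linarith)]; linarith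
      · rw [abs_of_nonneg (by linarith)]; linarith
    apply ENNReal.ofReal_le_ofReal
    have h1 : δ ^ p ≤ |x - h (g x)| ^ p := pow_le_pow_left₀ hδ.le hdist p
    have h2 : ρ ≤ ξ x := hξ x hxS
    calc ρ * δ ^ p ≤ ξ x * |x - h (g x)| ^ p :=
          mul_le_mul h2 h1 (by positivity) (le_trans hρ.le h2)
      _ = |x - h (g x)| ^ p * ξ x := mul_comm _ _
  calc ENNReal.ofReal (ρ * (β - α) ^ (p + 1) / ((k : ℝ) ^ (p + 1) * 2 ^ (2 * p + 2)))
      ≤ ENNReal.ofReal (ρ * δ ^ p * ((β - α) / 2)) := by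
        apply ENNReal.ofReal_le_ofReal
        have hδeq : ρ * δ ^ p * ((β - α) / 2)
            = ρ * (β - α) ^ (p + 1) / ((k:ℝ) ^ p * 2 ^ (2 * p + 1)) := by
          rw [hδdef, div_pow, mul_pow]
          have h4 : (4:ℝ) ^ p = 2 ^ (2 * p) := by rw [pow_mul]; norm_num
          rw [h4, pow_succ (2:ℝ) (2*p), pow_succ (β - α) p]
          field_simp
        rw [hδeq]
        have hd : (k:ℝ) ^ p * 2 ^ (2 * p + 1) ≤ (k:ℝ) ^ (p + 1) * 2 ^ (2 * p + 2) := by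
          have h1 : (1:ℝ) ≤ (k:ℝ) := by exact_mod_cast hk
          have := mul_le_mul (pow_le_pow_right₀ h1 (Nat.le_succ p))
            (pow_le_pow_right₀ (one_le_two (α := ℝ)) (Nat.le_succ (2 * p + 1)))
            (by positivity) (by positivity)
          simpa using this
        exact div_le_div_of_nonneg_left (by positivity) (by positivity) hd
    _ = ENNReal.ofReal (ρ * δ ^ p) * ENNReal.ofReal ((β - α) / 2) := by
        rw [← ENNReal.ofReal_mul (by positivity)]
    _ ≤ ENNReal.ofReal (ρ * δ ^ p) * volume A := by gcongr
    _ = ∫⁻ _ in A, ENNReal.ofReal (ρ * δ ^ p) ∂volume := by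
        rw [setLIntegral_const]
    _ ≤ ∫⁻ x in A, ENNReal.ofReal (|x - h (g x)| ^ p * ξ x) ∂volume :=
        setLIntegral_mono' hAmeas hpoint
    _ ≤ ∫⁻ x in S, ENNReal.ofReal (|x - h (g x)| ^ p * ξ x) ∂volume :=
        lintegral_mono_set Set.diff_subset
end

section
/- Let X : Ω → (∀ i : Fin n, 𝕏 i) be a dataset on a nonempty set Ω and let g : (∀ i, 𝕏 i) → 𝕐 be an m-noiselessly private mechanism with respect to X, where m ≥ 1. Fix i : Fin n and v : ∀ j, 𝕏 j, and let D be any nonempty finite subset of Set.range X_i (the support of a stochastic prior on the data of individual i). Then for the deterministic output channel t ↦ g (Function.update v i t), the exponentiated maximal leakage ∑_{y ∈ (fun t ↦ g (Function.update v i t)) '' D} (sup over t ∈ D of the conditional probability 𝟙[g (Function.update v i t) = y]) equals Nat.card ((fun t ↦ g (Function.update v i t)) '' D) and is at most m; hence the maximal leakage ℒ_c(X_i → Y) = log₂ of this sum is at most log₂ m (the privacy budget ε when m = 2^ε). -/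
namespace Finset

variable {α β R : Type*} [DecidableEq β]

theorem sup'_ite_eq_one_of_mem_image [LinearOrder R] [Zero R] [One R] [ZeroLEOneClass R]
    {s : Finset α} (hs : s.Nonempty) (f : α → β) {y : β} (hy : y ∈ s.image f) :
    s.sup' hs (fun t => if f t = y then (1 : R) else 0) = 1 := by
  obtain ⟨t, ht, rfl⟩ := mem_image.mp hy
  refine le_antisymm (sup'_le hs _ fun b _ => ?_) (le_sup'_of_le _ ht (by simp))
  split_ifs
  exacts [le_rfl, zero_le_one]

theorem sum_sup'_ite_eq_card_image [AddCommMonoidWithOne R] [LinearOrder R] [ZeroLEOneClass R]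
    {s : Finset α} (hs : s.Nonempty) (f : α → β) :
    ∑ y ∈ s.image f, s.sup' hs (fun t => if f t = y then (1 : R) else 0) = (s.image f).card := by
  rw [sum_congr rfl fun y hy => sup'_ite_eq_one_of_mem_image hs f hy, sum_const, nsmul_one]

end Finset

theorem NoiselesslyPrivate.card_image_le {Ω : Type*} {n : ℕ} {𝕏 : Fin n → Type*} {𝕐 : Type*}
    {X : Ω → ∀ i, 𝕏 i} {g : (∀ i, 𝕏 i) → 𝕐} {m : ℕ} (hpriv : NoiselesslyPrivate X g m)
    {i : Fin n} (hfin : (Set.range fun ω => X ω i).Finite) (v : ∀ j, 𝕏 j)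
    {S : Set (𝕏 i)} (hS : S ⊆ Set.range fun ω => X ω i) :
    Nat.card ((fun t => g (Function.update v i t)) '' S) ≤ m :=
  (Nat.card_mono (hfin.image _) (Set.image_mono hS)).trans (hpriv i v)

theorem noiseless_privacy_maximal_leakage_general {Ω : Type*} {n : ℕ}
    {𝕏 : Fin n → Type*} {𝕐 : Type*} [DecidableEq 𝕐]
    (X : Ω → ∀ i, 𝕏 i) (hfin : ∀ i, (Set.range (fun ω => X ω i)).Finite)
    (g : (∀ i, 𝕏 i) → 𝕐) (m : ℕ)
    (hpriv : NoiselesslyPrivate X g m)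
    (i : Fin n) (v : ∀ j, 𝕏 j)
    (D : Finset (𝕏 i)) (hD : D.Nonempty)
    (hDsub : (D : Set (𝕏 i)) ⊆ Set.range (fun ω => X ω i)) :
    (∑ y ∈ D.image (fun t => g (Function.update v i t)),
        D.sup' hD (fun t => if g (Function.update v i t) = y then (1 : ℝ) else 0)) =
      (Nat.card ((fun t => g (Function.update v i t)) '' (D : Set (𝕏 i))) : ℝ) ∧
    Nat.card ((fun t => g (Function.update v i t)) '' (D : Set (𝕏 i))) ≤ m ∧
    Real.logb 2 (∑ y ∈ D.image (fun t => g (Function.update v i t)),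
        D.sup' hD (fun t => if g (Function.update v i t) = y then (1 : ℝ) else 0)) ≤
      Real.logb 2 m := by
  set f : 𝕏 i → 𝕐 := fun t => g (Function.update v i t)
  have hcard : Nat.card (f '' D) = (D.image f).card := by
    rw [← Finset.coe_image, Nat.card_coe_set_eq, Set.ncard_coe_finset]
  have hsum := Finset.sum_sup'_ite_eq_card_image (R := ℝ) hD f
  have hle := hpriv.card_image_le (hfin i) v hDsub
  refine ⟨hsum.trans (by rw [hcard]), hle, ?_⟩
  rw [hcard] at hle
  rw [hsum]
  exact Real.logb_le_logb_of_le one_lt_two (by exact_mod_cast (hD.image f).card_pos)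
    (by exact_mod_cast hle)

/-- for the deterministic channel `t ↦ g (Function.update v i t)` of an
`m`-noiselessly private mechanism and any (support `D` of a) stochastic prior on the
data of individual `i`, the exponentiated Issa–Wagner maximal leakage
`∑_y max_{t ∈ D} P(Y = y | X_i = t)` equals the number of attainable outputs and is at
most `m`; hence the maximal leakage `log₂` of it is at most the budget `log₂ m`. -/
theorem noiseless_privacy_maximal_leakage {Ω : Type*} [Nonempty Ω] {n : ℕ}
    {𝕏 : Fin n → Type*} {𝕐 : Type*} [DecidableEq 𝕐]
    (X : Ω → ∀ i, 𝕏 i) (hfin : ∀ i, (Set.range (fun ω => X ω i)).Finite)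
    (g : (∀ i, 𝕏 i) → 𝕐) (m : ℕ) (hm : 1 ≤ m)
    (hpriv : NoiselesslyPrivate X g m)
    (i : Fin n) (v : ∀ j, 𝕏 j)
    (D : Finset (𝕏 i)) (hD : D.Nonempty)
    (hDsub : (D : Set (𝕏 i)) ⊆ Set.range (fun ω => X ω i)) :
    (∑ y ∈ D.image (fun t => g (Function.update v i t)),
        D.sup' hD (fun t => if g (Function.update v i t) = y then (1 : ℝ) else 0)) =
      (Nat.card ((fun t => g (Function.update v i t)) '' (D : Set (𝕏 i))) : ℝ) ∧
    Nat.card ((fun t => g (Function.update v i t)) '' (D : Set (𝕏 i))) ≤ m ∧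
    Real.logb 2 (∑ y ∈ D.image (fun t => g (Function.update v i t)),
        D.sup' hD (fun t => if g (Function.update v i t) = y then (1 : ℝ) else 0)) ≤
      Real.logb 2 m :=
  noiseless_privacy_maximal_leakage_general X hfin g m hpriv i v D hD hDsub
end

section
/- Let X : Ω → (∀ i : Fin n, 𝕏 i) be a dataset on a nonempty set Ω, and let g₁ : (∀ i, 𝕏 i) → 𝕐₁ be m₁-noiselessly private and g₂ : (∀ i, 𝕏 i) → 𝕐₂ be m₂-noiselessly private with respect to X, with m₁, m₂ ≥ 1. Then the paired mechanism x ↦ (g₁ x, g₂ x) is (m₁ · m₂)-noiselessly private with respect to X; that is, for every i : Fin n and every v : ∀ j, 𝕏 j, Nat.card ((fun t ↦ (g₁ (Function.update v i t), g₂ (Function.update v i t))) '' Set.range X_i) ≤ m₁ · m₂. (In privacy-budget terms: if 𝔐₁∘f is ε₁-noiselessly private and 𝔐₂∘f is ε₂-noiselessly private, then (𝔐₁, 𝔐₂)∘f is (ε₁ + ε₂)-noiselessly private.) -/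
/-- composition: if `g₁` is `m₁`-noiselessly private and `g₂` is
`m₂`-noiselessly private, then the paired mechanism `x ↦ (g₁ x, g₂ x)` is
`(m₁ * m₂)`-noiselessly private (privacy budgets `ε₁ + ε₂` add up). -/
theorem noiseless_privacy_composition {Ω : Type*} [Nonempty Ω] {n : ℕ}
    {𝕏 : Fin n → Type*} {𝕐₁ 𝕐₂ : Type*}
    (X : Ω → ∀ i, 𝕏 i)
    (g₁ : (∀ i, 𝕏 i) → 𝕐₁) (g₂ : (∀ i, 𝕏 i) → 𝕐₂) (m₁ m₂ : ℕ)
    (hm₁ : 1 ≤ m₁) (hm₂ : 1 ≤ m₂)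
    (hpriv₁ : NoiselesslyPrivate X g₁ m₁) (hpriv₂ : NoiselesslyPrivate X g₂ m₂) :
    NoiselesslyPrivate X (fun x => (g₁ x, g₂ x)) (m₁ * m₂) := by
  intro i v
  set S : Set (𝕏 i) := Set.range (fun ω => X ω i) with hS
  set A : Set 𝕐₁ := (fun t => g₁ (Function.update v i t)) '' S with hA
  set B : Set 𝕐₂ := (fun t => g₂ (Function.update v i t)) '' S with hB
  set T : Set (𝕐₁ × 𝕐₂) :=
    (fun t => (g₁ (Function.update v i t), g₂ (Function.update v i t))) '' S with hT
  have hsub : T ⊆ A ×ˢ B := by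
    rintro ⟨y₁, y₂⟩ ⟨t, ht, h⟩
    simp only [Prod.mk.injEq] at h
    exact ⟨⟨t, ht, h.1⟩, ⟨t, ht, h.2⟩⟩
  have hTA : A = Prod.fst '' T := by
    ext y; constructor
    · rintro ⟨t, ht, rfl⟩; exact ⟨_, ⟨t, ht, rfl⟩, rfl⟩
    · rintro ⟨p, ⟨t, ht, rfl⟩, rfl⟩; exact ⟨t, ht, rfl⟩
  have hTB : B = Prod.snd '' T := by
    ext y; constructor
    · rintro ⟨t, ht, rfl⟩; exact ⟨_, ⟨t, ht, rfl⟩, rfl⟩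
    · rintro ⟨p, ⟨t, ht, rfl⟩, rfl⟩; exact ⟨t, ht, rfl⟩
  by_cases hfin : T.Finite
  · have hAfin : A.Finite := hTA ▸ hfin.image _
    have hBfin : B.Finite := hTB ▸ hfin.image _
    calc Nat.card T ≤ Nat.card (A ×ˢ B : Set (𝕐₁ × 𝕐₂)) :=
          Nat.card_mono (hAfin.prod hBfin) hsub
      _ = Nat.card A * Nat.card B := by
          rw [Nat.card_congr (Equiv.Set.prod A B), Nat.card_prod]
      _ ≤ m₁ * m₂ := Nat.mul_le_mul (hpriv₁ i v) (hpriv₂ i v)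
  · rw [Set.Infinite.card_eq_zero hfin]
    positivity
end
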